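/- Let A = (Q, {a₁, a₂, a₃}, δ) be a 3-letter synchronizing DFA and B the 2-letter DFA on Q × {a₁,a₂,a₃} with δ'((q,a_i), a) = (q, a_{min(i+1,3)}), δ'((q,a_i), b) = (δ(q,a_i), a₁). If w is any word over {a₁,a₂,a₃} synchronizing A, and v = b·v₁⋯v_{|w|} with v_s ∈ {b, ab, aab} according as w[s] ∈ {a₁, a₂, a₃}, then for every state (q, x) of B, δ'((q, x), v) = (δ(q, w), a₁). In particular v synchronizes B. -/
import Mathlib


/-- The two-letter alphabet {a, b}. -/
inductive Letter2 where
  | a | b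
deriving DecidableEq

/-- Extension of a transition function to words (left-to-right action). -/
def runW {Q A : Type*} (δ : Q → A → Q) : Q → List A → Q
  | q, [] => q
  | q, x :: w => runW δ (δ q x) w

/-- The 2-letter automaton B built from a 3-letter automaton A = (Q, {a₁,a₂,a₃}, δ):
letter a advances the stored letter index (capped at 3 = index 2), letter b applies
the stored letter to the first component and resets the stored letter to a₁. -/
def deltaB {Q : Type*} (δ : Q → Fin 3 → Q) : Q × Fin 3 → Letter2 → Q × Fin 3
  | (q, i), Letter2.a => (q, ⟨min ((i : ℕ) + 1) 2, by omega⟩)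
  | (q, i), Letter2.b => (δ q i, ⟨0, by omega⟩)

/-- The encoding of a letter of A as a word over {a,b}: a₁ ↦ b, a₂ ↦ ab, a₃ ↦ aab. -/
def codeLetter : Fin 3 → List Letter2
  | ⟨0, _⟩ => [Letter2.b]
  | ⟨1, _⟩ => [Letter2.a, Letter2.b]
  | _ => [Letter2.a, Letter2.a, Letter2.b]

/-- The encoding of a word of A: w ↦ b·v₁⋯v_ℓ. -/
def codeWord (w : List (Fin 3)) : List Letter2 :=
  Letter2.b :: w.flatMap codeLetter


lemma runW_append {Q A : Type*} (δ : Q → A → Q) (q : Q) (u v : List A) :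
    runW δ q (u ++ v) = runW δ (runW δ q u) v := by
  induction u generalizing q with
  | nil => rfl
  | cons x u ih => simp [runW, ih]

lemma runW_flatMap {Q : Type*} (δ : Q → Fin 3 → Q) (q : Q) (w : List (Fin 3)) :
    runW (deltaB δ) (q, ⟨0, by omega⟩) (w.flatMap codeLetter)
      = (runW δ q w, ⟨0, by omega⟩) := by
  induction w generalizing q with
  | nil => rfl
  | cons i w ih =>
    rw [List.flatMap_cons, runW_append]
    have h : runW (deltaB δ) (q, ⟨0, by omega⟩) (codeLetter i)
        = (δ q i, ⟨0, by omega⟩) := by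
      fin_cases i <;> rfl
    rw [h]; exact ih (δ q i)

/-- If w synchronizes A, then for every state (q,x) of B the encoded word
v = b·v₁⋯v_ℓ satisfies δ'((q,x), v) = (δ(q,w), a₁); in particular v synchronizes B. -/
theorem code_word_simulates
    {Q : Type*} (δ : Q → Fin 3 → Q) (w : List (Fin 3))
    (hsync : ∃ p : Q, ∀ q : Q, runW δ q w = p) :
    (∀ (q : Q) (x : Fin 3),
        runW (deltaB δ) (q, x) (codeWord w) = (runW δ q w, ⟨0, by omega⟩)) ∧
      ∃ p' : Q × Fin 3, ∀ s : Q × Fin 3, runW (deltaB δ) s (codeWord w) = p' := by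
  obtain ⟨p, hp⟩ := hsync
  have key : ∀ (q : Q) (x : Fin 3),
      runW (deltaB δ) (q, x) (codeWord w) = (runW δ q w, ⟨0, by omega⟩) := by
    intro q x
    have : runW (deltaB δ) (q, x) (codeWord w)
        = runW (deltaB δ) (δ q x, ⟨0, by omega⟩) (w.flatMap codeLetter) := rfl
    rw [this, runW_flatMap, hp (δ q x), hp q]
  exact ⟨key, ⟨(p, ⟨0, by omega⟩), fun ⟨q, x⟩ => by rw [key q x, hp q]⟩⟩
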